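/- arXiv:2204.00190 — 2 statements merged into one kernel-verified Lean document; each statement's English description precedes it below -/
import Mathlib

section
/- Let a, b ∈ ℂ² satisfy |a₁| = |b₁|, |a₂| = |b₂|, |a₁ - a₂| = |b₁ - b₂|, and |a₁ - i·a₂| = |b₁ - i·b₂|. If a₂ ≠ 0, then b₂ ≠ 0 and a₁/a₂ = b₁/b₂. -/
/-!
The product `z * conj w` is recovered from the four norms `‖z‖`, `‖w‖`, `‖z - w‖`, `‖z - I * w‖`
by polarization, and `z / w = z * conj w / ‖w‖ ^ 2`. Hence the hypotheses pin down the ratio.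
-/

open ComplexConjugate

namespace Complex

theorem re_mul_conj_eq_norm_sq (z w : ℂ) :
    (z * conj w).re = (‖z‖ ^ 2 + ‖w‖ ^ 2 - ‖z - w‖ ^ 2) / 2 := by
  simp only [Complex.sq_norm, normSq_sub]
  ring

theorem im_mul_conj_eq_norm_sq (z w : ℂ) :
    (z * conj w).im = (‖z‖ ^ 2 + ‖w‖ ^ 2 - ‖z - I * w‖ ^ 2) / 2 := by
  have h : (z * conj (I * w)).re = (z * conj w).im := by
    simp only [map_mul, conj_I, mul_re, mul_im, neg_re, neg_im, I_re, I_im, conj_re, conj_im]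
    ring
  rw [← h, re_mul_conj_eq_norm_sq, norm_mul, norm_I, one_mul]

theorem mul_conj_eq_of_norm_eq {z w z' w' : ℂ} (hz : ‖z‖ = ‖z'‖) (hw : ‖w‖ = ‖w'‖)
    (hzw : ‖z - w‖ = ‖z' - w'‖) (hzIw : ‖z - I * w‖ = ‖z' - I * w'‖) :
    z * conj w = z' * conj w' :=
  ext (by rw [re_mul_conj_eq_norm_sq, re_mul_conj_eq_norm_sq, hz, hw, hzw])
    (by rw [im_mul_conj_eq_norm_sq, im_mul_conj_eq_norm_sq, hz, hw, hzIw])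

theorem div_eq_mul_conj_div_sq_norm (z w : ℂ) : z / w = z * conj w / (‖w‖ ^ 2 : ℝ) := by
  rw [div_eq_mul_inv, inv_def, Complex.sq_norm, div_eq_mul_inv, ofReal_inv, mul_assoc]

end Complex

/-- Under the four magnitude conditions, if `a 1 ≠ 0` then `b 1 ≠ 0` and the
quotients of first over second entries coincide. -/
theorem stmt1 (a b : Fin 2 → ℂ)
    (h1 : ‖a 0‖ = ‖b 0‖)
    (h2 : ‖a 1‖ = ‖b 1‖)
    (h3 : ‖a 0 - a 1‖ = ‖b 0 - b 1‖)
    (h4 : ‖a 0 - Complex.I * a 1‖ = ‖b 0 - Complex.I * b 1‖)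
    (ha : a 1 ≠ 0) :
    b 1 ≠ 0 ∧ a 0 / a 1 = b 0 / b 1 := by
  refine ⟨norm_ne_zero_iff.mp (h2 ▸ norm_ne_zero_iff.mpr ha), ?_⟩
  rw [Complex.div_eq_mul_conj_div_sq_norm (a 0), Complex.div_eq_mul_conj_div_sq_norm (b 0), h2,
    Complex.mul_conj_eq_of_norm_eq h1 h2 h3 h4]
end

section
/- Let Γ = (V,E) be a d-regular connected finite graph with d ≥ 2, and let δ < λ₁(Γ)/12 where λ₁(Γ) is the normalized spectral gap. Then after removing at most 2δd|V| edges from Γ, the resulting graph has a connected component containing at least 2|V|/3 vertices. -/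
/-!
If every component of `G'` had fewer than `2n/3` vertices, grouping components would give a
union `W` of components with `n/3 ≤ |W| ≤ 2n/3`. No edge of `G'` leaves `W`, so every edge of `G`
leaving `W` was removed: there are at most `2δdn` of them. The centered indicator `x` of `W` is
orthogonal to the kernel of the normalized Laplacian `L = d⁻¹ • (D - A)` (the constants, as `G` is
connected), so `λ₁ ‖x‖² ≤ ⟪x, L x⟫ = |∂W| / d ≤ 2δn`, while `‖x‖² = |W|(n - |W|)/n ≥ 2n/9`.
Hence `λ₁ ≤ 9δ`, contradicting `12δ < λ₁`.
-/

open Finset Matrix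

theorem Matrix.IsHermitian.mul_dotProduct_self_le_dotProduct_mulVec {n : Type*} [Fintype n]
    [DecidableEq n] {A : Matrix n n ℝ} (hA : A.IsHermitian) {lam : ℝ}
    (hmin : ∀ μ, Module.End.HasEigenvalue (toLin' A) μ → μ ≠ 0 → lam ≤ μ)
    {x : n → ℝ} (hx : ∀ y, A *ᵥ y = 0 → x ⬝ᵥ y = 0) :
    lam * (x ⬝ᵥ x) ≤ x ⬝ᵥ (A *ᵥ x) := by
  let b := hA.eigenvectorBasis
  have hinner (y z : EuclideanSpace ℝ n) : inner ℝ y z = y.ofLp ⬝ᵥ z.ofLp := by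
    rw [EuclideanSpace.inner_eq_star_dotProduct, star_trivial, dotProduct_comm]
  have hcoord (i : n) : b i ⬝ᵥ (A *ᵥ x) = hA.eigenvalues i * (x ⬝ᵥ b i) := by
    rw [dotProduct_mulVec, ← mulVec_transpose, ← conjTranspose_eq_transpose_of_trivial, hA.eq,
      hA.mulVec_eigenvectorBasis, smul_dotProduct, smul_eq_mul, dotProduct_comm]
  have hself : x ⬝ᵥ x = ∑ i, (x ⬝ᵥ b i) ^ 2 := by
    have := b.sum_inner_mul_inner (WithLp.toLp 2 x) (WithLp.toLp 2 x)
    simp only [hinner] at this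
    rw [← this]
    exact Finset.sum_congr rfl fun i _ => by rw [dotProduct_comm (b i), sq]
  have hform : x ⬝ᵥ (A *ᵥ x) = ∑ i, hA.eigenvalues i * (x ⬝ᵥ b i) ^ 2 := by
    have := b.sum_inner_mul_inner (WithLp.toLp 2 x) (WithLp.toLp 2 (A *ᵥ x))
    simp only [hinner, hcoord] at this
    rw [← this]
    exact Finset.sum_congr rfl fun i _ => by ring
  rw [hself, hform, Finset.mul_sum]
  refine Finset.sum_le_sum fun i _ => ?_
  by_cases hμ : hA.eigenvalues i = 0
  · have hker : A *ᵥ b i = 0 := by rw [hA.mulVec_eigenvectorBasis, hμ, zero_smul]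
    simp [hμ, hx _ hker]
  · have heig : Module.End.HasEigenvalue (toLin' A) (hA.eigenvalues i) := by
      rw [Module.End.hasEigenvalue_iff_mem_spectrum, Matrix.spectrum_toLin']
      exact hA.eigenvalues_mem_spectrum_real i
    exact mul_le_mul_of_nonneg_right (hmin _ heig hμ) (sq_nonneg _)

theorem Finset.exists_subset_sum_mem_Icc {ι : Type*} [DecidableEq ι] (f : ι → ℝ) {a : ℝ}
    (ha : 0 ≤ a) (s : Finset ι) (hf : ∀ i ∈ s, f i ≤ 2 * a) (hs : a ≤ ∑ i ∈ s, f i) :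
    ∃ t ⊆ s, a ≤ ∑ i ∈ t, f i ∧ ∑ i ∈ t, f i ≤ 2 * a := by
  induction s using Finset.induction_on with
  | empty => exact ⟨∅, subset_rfl, hs, by simpa using ha⟩
  | insert i s hi ih =>
    rw [sum_insert hi] at hs
    by_cases hs' : a ≤ ∑ j ∈ s, f j
    · obtain ⟨t, hts, ht⟩ := ih (fun j hj => hf j (mem_insert_of_mem hj)) hs'
      exact ⟨t, hts.trans (subset_insert i s), ht⟩
    by_cases hfi : a ≤ f i
    · exact ⟨{i}, by simp, by simpa using ⟨hfi, hf i (mem_insert_self i s)⟩⟩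
    · refine ⟨insert i s, subset_rfl, ?_⟩
      rw [sum_insert hi]
      constructor <;> linarith

section CenteredIndicator

variable {V : Type*} [Fintype V] [DecidableEq V]

noncomputable def Finset.centeredIndicator (W : Finset V) : V → ℝ :=
  fun v => (if v ∈ W then 1 else 0) - #W / Fintype.card V

theorem Finset.sum_centeredIndicator (W : Finset V) : ∑ v, W.centeredIndicator v = 0 := by
  rcases isEmpty_or_nonempty V with hV | hV
  · simp
  simp only [centeredIndicator, sum_sub_distrib, sum_boole, sum_const, card_univ, nsmul_eq_mul,
    filter_mem_eq_of_subset (subset_univ W)]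
  field_simp
  ring

theorem Finset.dotProduct_self_centeredIndicator (W : Finset V) :
    W.centeredIndicator ⬝ᵥ W.centeredIndicator =
      #W * (Fintype.card V - #W) / Fintype.card V := by
  rcases isEmpty_or_nonempty V with hV | hV
  · simp [Subsingleton.elim W ∅]
  have hsq (v : V) : W.centeredIndicator v * W.centeredIndicator v =
      (1 - 2 * (#W / Fintype.card V)) * (if v ∈ W then 1 else 0) + (#W / Fintype.card V) ^ 2 := by
    by_cases hv : v ∈ W <;> simp only [centeredIndicator, hv, if_true, if_false] <;> ring
  simp only [dotProduct, hsq, sum_add_distrib, ← mul_sum, sum_boole, sum_const, card_univ,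
    nsmul_eq_mul, filter_mem_eq_of_subset (subset_univ W)]
  field_simp
  ring

end CenteredIndicator

namespace SimpleGraph

variable {V : Type*}

theorem card_interedges_comm (G : SimpleGraph V) [DecidableRel G.Adj] (s t : Finset V) :
    #(G.interedges s t) = #(G.interedges t s) :=
  have : Std.Symm G.Adj := ⟨fun _ _ h => h.symm⟩
  Rel.card_interedges_comm s t

variable [Fintype V] [DecidableEq V]

theorem IsRegularOfDegree.one_sub_inv_smul_adjMatrix {R : Type*} [Field R] [CharZero R]
    {G : SimpleGraph V} [DecidableRel G.Adj] {d : ℕ} (hreg : G.IsRegularOfDegree d) (hd : d ≠ 0) :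
    (1 : Matrix V V R) - (d : R)⁻¹ • G.adjMatrix R = (d : R)⁻¹ • G.lapMatrix R := by
  have hdeg : G.degMatrix R = (d : R) • 1 := by
    rw [degMatrix, smul_one_eq_diagonal]
    exact congrArg diagonal (funext fun v => by rw [hreg v])
  rw [lapMatrix, hdeg, smul_sub, smul_smul, inv_mul_cancel₀ (Nat.cast_ne_zero.mpr hd), one_smul]

theorem Connected.dotProduct_eq_zero_of_lapMatrix_mulVec_eq_zero {G : SimpleGraph V}
    [DecidableRel G.Adj] (hconn : G.Connected) {x y : V → ℝ} (hx : ∑ v, x v = 0)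
    (hy : G.lapMatrix ℝ *ᵥ y = 0) : x ⬝ᵥ y = 0 := by
  obtain ⟨v₀⟩ := hconn.nonempty
  have hconst (v : V) : y v = y v₀ :=
    lapMatrix_mulVec_eq_zero_iff_forall_reachable G |>.mp hy v v₀ (hconn v v₀)
  simp only [dotProduct, hconst, ← Finset.sum_mul, hx, zero_mul]

theorem sum_sum_ite_adj_eq_card_interedges (G : SimpleGraph V) [DecidableRel G.Adj]
    (s t : Finset V) :
    (∑ i, ∑ j, if G.Adj i j then (if i ∈ s ∧ j ∈ t then (1 : ℝ) else 0) else 0) =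
      #(G.interedges s t) := by
  have : G.interedges s t = ({p : V × V | G.Adj p.1 p.2 ∧ p.1 ∈ s ∧ p.2 ∈ t} : Finset _) := by
    ext p
    simp only [mem_interedges_iff, mem_filter, mem_univ, true_and]
    tauto
  rw [this, card_filter, ← univ_product_univ, sum_product]
  push_cast
  simp only [ite_and]

theorem dotProduct_lapMatrix_mulVec_centeredIndicator (G : SimpleGraph V) [DecidableRel G.Adj]
    (W : Finset V) :
    W.centeredIndicator ⬝ᵥ (G.lapMatrix ℝ *ᵥ W.centeredIndicator) = #(G.interedges W Wᶜ) := by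
  have hsq (i j : V) : (W.centeredIndicator i - W.centeredIndicator j) ^ 2 =
      (if i ∈ W ∧ j ∈ Wᶜ then 1 else 0) + (if i ∈ Wᶜ ∧ j ∈ W then 1 else 0) := by
    have : W.centeredIndicator i - W.centeredIndicator j =
        (if i ∈ W then 1 else 0) - (if j ∈ W then 1 else 0) := by
      simp only [centeredIndicator]; ring
    rw [this]
    by_cases hi : i ∈ W <;> by_cases hj : j ∈ W <;> simp [hi, hj]
  rw [← toLinearMap₂'_apply', lapMatrix_toLinearMap₂']
  simp only [hsq, ite_add_zero, sum_add_distrib, sum_sum_ite_adj_eq_card_interedges]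
  rw [card_interedges_comm G Wᶜ]
  ring

theorem Connected.mul_dotProduct_self_centeredIndicator_le {G : SimpleGraph V}
    [DecidableRel G.Adj] (hconn : G.Connected) {d : ℕ} (hd : d ≠ 0) (hreg : G.IsRegularOfDegree d)
    {lam : ℝ} (hmin : ∀ μ : ℝ, Module.End.HasEigenvalue
      (toLin' ((1 : Matrix V V ℝ) - (d : ℝ)⁻¹ • G.adjMatrix ℝ)) μ → μ ≠ 0 → lam ≤ μ)
    (W : Finset V) :
    lam * (W.centeredIndicator ⬝ᵥ W.centeredIndicator) ≤ #(G.interedges W Wᶜ) / d := by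
  rw [hreg.one_sub_inv_smul_adjMatrix hd] at hmin
  have hray := ((G.isHermitian_lapMatrix ℝ).smul (IsSelfAdjoint.all _)
    ).mul_dotProduct_self_le_dotProduct_mulVec hmin (x := W.centeredIndicator)
    fun y hy => hconn.dotProduct_eq_zero_of_lapMatrix_mulVec_eq_zero W.sum_centeredIndicator
      (by simpa [smul_mulVec, hd] using hy)
  rwa [smul_mulVec, dotProduct_smul, smul_eq_mul, G.dotProduct_lapMatrix_mulVec_centeredIndicator,
    inv_mul_eq_div] at hray

theorem card_interedges_compl_le_card_sdiff_edgeFinset (G G' : SimpleGraph V) [DecidableRel G.Adj]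
    [DecidableRel G'.Adj] {W : Finset V} (hW : ∀ u ∈ W, ∀ v, G'.Adj u v → v ∈ W) :
    #(G.interedges W Wᶜ) ≤ #(G.edgeFinset \ G'.edgeFinset) := by
  refine card_le_card_of_injOn (fun p => s(p.1, p.2)) (fun p hp => ?_) (fun p hp q hq hpq => ?_)
  · rw [mem_coe, mem_interedges_iff, mem_compl] at hp
    simp only [mem_coe, mem_sdiff, mem_edgeFinset, mem_edgeSet]
    exact ⟨hp.2.2, fun h => hp.2.1 (hW _ hp.1 _ h)⟩
  · rw [mem_coe, mem_interedges_iff, mem_compl] at hp hq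
    rcases Sym2.eq_iff.mp hpq with ⟨h₁, h₂⟩ | ⟨h₁, -⟩
    · exact Prod.ext h₁ h₂
    · exact absurd (h₁ ▸ hp.1) hq.2.1

theorem exists_adj_closed_finset_of_card_supp_le (G : SimpleGraph V) [DecidableRel G.Adj]
    (hG : ∀ K : G.ConnectedComponent, (K.supp.ncard : ℝ) ≤ 2 * Fintype.card V / 3) :
    ∃ W : Finset V, (∀ u ∈ W, ∀ v, G.Adj u v → v ∈ W) ∧
      (Fintype.card V : ℝ) / 3 ≤ #W ∧ (#W : ℝ) ≤ 2 * Fintype.card V / 3 := by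
  classical
  have hcard (t : Finset G.ConnectedComponent) :
      (#{v | G.connectedComponentMk v ∈ t} : ℝ) = ∑ K ∈ t, (K.supp.ncard : ℝ) := by
    rw [card_eq_sum_card_fiberwise (f := G.connectedComponentMk) (t := t)
      fun v hv => by simpa using hv]
    push_cast
    refine sum_congr rfl fun K hK => ?_
    rw [← Set.ncard_coe_finset]
    congr 2
    ext v
    simpa using fun h => h ▸ hK
  obtain ⟨t, -, ht⟩ :=
    exists_subset_sum_mem_Icc (fun K : G.ConnectedComponent => (K.supp.ncard : ℝ))
    (a := Fintype.card V / 3) (by positivity) univ (fun K _ => by linarith [hG K])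
    (by rw [← hcard]; simpa using div_le_self (Nat.cast_nonneg _) (by norm_num : (1 : ℝ) ≤ 3))
  refine ⟨({v | G.connectedComponentMk v ∈ t} : Finset V), fun u hu v huv => ?_, ?_⟩
  · simp only [mem_filter, mem_univ, true_and] at hu ⊢
    rwa [← ConnectedComponent.connectedComponentMk_eq_of_adj huv]
  · rw [hcard]
    constructor <;> linarith [ht.1, ht.2]

end SimpleGraph

theorem stmt8_general {V : Type*} [Fintype V] [DecidableEq V]
    (G : SimpleGraph V) [DecidableRel G.Adj] (hconn : G.Connected)
    (d : ℕ) (hd : 2 ≤ d) (hreg : G.IsRegularOfDegree d)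
    (lam : ℝ)
    (hmin : ∀ μ : ℝ, Module.End.HasEigenvalue
      (Matrix.toLin' ((1 : Matrix V V ℝ) - (d : ℝ)⁻¹ • G.adjMatrix ℝ)) μ → μ ≠ 0 → lam ≤ μ)
    (δ : ℝ) (hδ : δ < lam / 12)
    (G' : SimpleGraph V) [DecidableRel G'.Adj]
    (hrem : (((G.edgeFinset \ G'.edgeFinset).card : ℝ)) ≤ 2 * δ * d * Fintype.card V) :
    ∃ K : G'.ConnectedComponent, (2 * (Fintype.card V : ℝ)) / 3 ≤ (K.supp.ncard : ℝ) := by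
  by_contra! hsmall
  have hd₀ : d ≠ 0 := by omega
  have hdpos : (0 : ℝ) < d := Nat.cast_pos.mpr (Nat.pos_of_ne_zero hd₀)
  have hn : (0 : ℝ) < Fintype.card V := by
    exact_mod_cast Fintype.card_pos_iff.mpr hconn.nonempty
  obtain ⟨W, hWclosed, hW₁, hW₂⟩ :=
    G'.exists_adj_closed_finset_of_card_supp_le fun K => (hsmall K).le
  have hcut : (#(G.interedges W Wᶜ) : ℝ) ≤ 2 * δ * d * Fintype.card V :=
    le_trans (by exact_mod_cast G.card_interedges_compl_le_card_sdiff_edgeFinset G' hWclosed) hrem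
  have hnorm : 2 * Fintype.card V / 9 ≤ W.centeredIndicator ⬝ᵥ W.centeredIndicator := by
    rw [W.dotProduct_self_centeredIndicator, le_div_iff₀ hn]
    nlinarith
  have hδ₀ : 0 ≤ δ := by
    have : (0 : ℝ) ≤ 2 * δ * d * Fintype.card V := le_trans (Nat.cast_nonneg _) hrem
    nlinarith [mul_pos hdpos hn]
  have hgap : lam * (2 * Fintype.card V / 9) ≤ 2 * δ * Fintype.card V :=
    calc lam * (2 * Fintype.card V / 9)
        ≤ lam * (W.centeredIndicator ⬝ᵥ W.centeredIndicator) := by gcongr; linarith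
      _ ≤ #(G.interedges W Wᶜ) / d := hconn.mul_dotProduct_self_centeredIndicator_le hd₀ hreg hmin W
      _ ≤ 2 * δ * d * Fintype.card V / d := by gcongr
      _ = 2 * δ * Fintype.card V := by field_simp
  linarith [mul_lt_mul_of_pos_right hδ hn, mul_nonneg hδ₀ hn.le]

/-- Removing at most `2δd|V|` edges from a `d`-regular connected graph with
normalized spectral gap `lam`, where `δ < lam/12`, leaves a connected component
with at least `2|V|/3` vertices. -/
theorem stmt8 {V : Type*} [Fintype V] [DecidableEq V]
    (G : SimpleGraph V) [DecidableRel G.Adj] (hconn : G.Connected)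
    (d : ℕ) (hd : 2 ≤ d) (hreg : G.IsRegularOfDegree d)
    (lam : ℝ)
    (heig : Module.End.HasEigenvalue
      (Matrix.toLin' ((1 : Matrix V V ℝ) - (d : ℝ)⁻¹ • G.adjMatrix ℝ)) lam)
    (hne : lam ≠ 0)
    (hmin : ∀ μ : ℝ, Module.End.HasEigenvalue
      (Matrix.toLin' ((1 : Matrix V V ℝ) - (d : ℝ)⁻¹ • G.adjMatrix ℝ)) μ → μ ≠ 0 → lam ≤ μ)
    (δ : ℝ) (hδ : δ < lam / 12)
    (G' : SimpleGraph V) [DecidableRel G'.Adj] (hle : G' ≤ G)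
    (hrem : (((G.edgeFinset \ G'.edgeFinset).card : ℝ)) ≤ 2 * δ * d * Fintype.card V) :
    ∃ K : G'.ConnectedComponent, (2 * (Fintype.card V : ℝ)) / 3 ≤ (K.supp.ncard : ℝ) :=
  stmt8_general G hconn d hd hreg lam hmin δ hδ G' hrem
end
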